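/- arXiv:2306.02606 — 3 statements merged into one kernel-verified Lean document; each statement's English description precedes it below -/
import Mathlib

section
/- For k > 0 and fixed τ ∈ ℝ, the function u(x, t) = e^{-k(t-τ)} · sin(r)/r (extended by u = e^{-k(t-τ)} at r = 0), where r = |x| for x ∈ ℝ³, satisfies the heat equation ∂u/∂t - kΔu = 0 on ℝ³ × ℝ. -/
/-- Spatial Laplacian of a function of three real variables, via iterated `deriv`. -/
noncomputable def lap3 (u : ℝ → ℝ → ℝ → ℝ) (x y z : ℝ) : ℝ :=
  deriv (deriv (fun t => u t y z)) x + deriv (deriv (fun t => u x t z)) y +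
    deriv (deriv (fun t => u x y t)) z

open Real hiding sinc
open Filter Topology

noncomputable def sl (c t : ℝ) : ℝ :=
  if Real.sqrt (t ^ 2 + c) = 0 then 1 else Real.sin (Real.sqrt (t ^ 2 + c)) / Real.sqrt (t ^ 2 + c)

lemma ev_pos {c x : ℝ} (h : 0 < x ^ 2 + c) : ∀ᶠ t in 𝓝 x, 0 < t ^ 2 + c := by
  have : Continuous fun t : ℝ => t ^ 2 + c := by continuity
  exact (this.tendsto x).eventually (eventually_gt_nhds h)

lemma hasDeriv_p {c x : ℝ} (h : 0 < x ^ 2 + c) :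
    HasDerivAt (fun t => Real.sqrt (t ^ 2 + c)) (x / Real.sqrt (x ^ 2 + c)) x := by
  have hq : HasDerivAt (fun t : ℝ => t ^ 2 + c) (2 * x) x := by
    simpa using ((hasDerivAt_pow 2 x).add_const c)
  have hs := (Real.hasDerivAt_sqrt (ne_of_gt h)).comp x hq
  have hp0 : Real.sqrt (x ^ 2 + c) ≠ 0 := by positivity
  refine hs.congr_deriv ?_
  symm
  field_simp

lemma sl_hasDeriv {c x : ℝ} (h : 0 < x ^ 2 + c) :
    HasDerivAt (sl c)
      (x * (Real.sqrt (x ^ 2 + c) * Real.cos (Real.sqrt (x ^ 2 + c)) -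
        Real.sin (Real.sqrt (x ^ 2 + c))) / Real.sqrt (x ^ 2 + c) ^ 3) x := by
  set p := Real.sqrt (x ^ 2 + c) with hp
  have hppos : 0 < p := Real.sqrt_pos.mpr h
  have hp0 : p ≠ 0 := ne_of_gt hppos
  have hP := hasDeriv_p h
  have hsin : HasDerivAt (fun t => Real.sin (Real.sqrt (t ^ 2 + c))) (Real.cos p * (x / p)) x :=
    HasDerivAt.comp x (Real.hasDerivAt_sin _) hP
  have hdiv := hsin.div hP hp0
  have hev : sl c =ᶠ[𝓝 x] fun t => Real.sin (Real.sqrt (t ^ 2 + c)) / Real.sqrt (t ^ 2 + c) := by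
    filter_upwards [ev_pos h] with t ht
    have : Real.sqrt (t ^ 2 + c) ≠ 0 := by positivity
    simp [sl, this]
  have h2 := hdiv.congr_of_eventuallyEq hev
  have hpsq : p ^ 2 = x ^ 2 + c := Real.sq_sqrt h.le
  refine h2.congr_deriv ?_
  symm
  field_simp
  ring

lemma sl_deriv2 {c x : ℝ} (h : 0 < x ^ 2 + c) :
    deriv (deriv (sl c)) x =
      (Real.sqrt (x ^ 2 + c) * Real.cos (Real.sqrt (x ^ 2 + c)) - Real.sin (Real.sqrt (x ^ 2 + c))
        - x ^ 2 * Real.sin (Real.sqrt (x ^ 2 + c))) / Real.sqrt (x ^ 2 + c) ^ 3 -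
      3 * x ^ 2 * (Real.sqrt (x ^ 2 + c) * Real.cos (Real.sqrt (x ^ 2 + c)) -
        Real.sin (Real.sqrt (x ^ 2 + c))) / Real.sqrt (x ^ 2 + c) ^ 5 := by
  have hev : deriv (sl c) =ᶠ[𝓝 x]
      fun t => t * (Real.sqrt (t ^ 2 + c) * Real.cos (Real.sqrt (t ^ 2 + c)) -
        Real.sin (Real.sqrt (t ^ 2 + c))) / Real.sqrt (t ^ 2 + c) ^ 3 := by
    filter_upwards [ev_pos h] with t ht using (sl_hasDeriv ht).deriv
  rw [hev.deriv_eq]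
  set p := Real.sqrt (x ^ 2 + c) with hp
  have hppos : 0 < p := Real.sqrt_pos.mpr h
  have hp0 : p ≠ 0 := ne_of_gt hppos
  have hP := hasDeriv_p h
  have hsin : HasDerivAt (fun t => Real.sin (Real.sqrt (t ^ 2 + c))) (Real.cos p * (x / p)) x :=
    HasDerivAt.comp x (Real.hasDerivAt_sin _) hP
  have hcos : HasDerivAt (fun t => Real.cos (Real.sqrt (t ^ 2 + c))) (-Real.sin p * (x / p)) x :=
    HasDerivAt.comp x (Real.hasDerivAt_cos _) hP
  have hA : HasDerivAt (fun t => Real.sqrt (t ^ 2 + c) * Real.cos (Real.sqrt (t ^ 2 + c)) -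
      Real.sin (Real.sqrt (t ^ 2 + c))) (-(x * Real.sin p)) x := by
    have := (hP.mul hcos).sub hsin
    refine this.congr_deriv ?_
    symm
    field_simp
    ring
  have hN := (hasDerivAt_id x).mul hA
  have hden : HasDerivAt (fun t => Real.sqrt (t ^ 2 + c) ^ 3) (3 * p ^ 2 * (x / p)) x := by
    exact hP.pow 3
  have hG := hN.div hden (by positivity)
  simp only [id_eq] at hG
  erw [hG.deriv]
  simp only [Pi.mul_apply, id_eq, ← hp]
  field_simp
  ring

noncomputable def sinc (t : ℝ) : ℝ := if t = 0 then 1 else Real.sin t / t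

lemma sl_zero : sl 0 = sinc := by
  funext t
  rcases eq_or_ne t 0 with rfl | ht
  · simp [sl, sinc]
  · have h1 : Real.sqrt (t ^ 2 + 0) = |t| := by rw [add_zero, Real.sqrt_sq_eq_abs]
    have h2 : |t| ≠ 0 := abs_ne_zero.mpr ht
    simp only [sl, sinc, h1, h2, if_neg, ht]
    rcases abs_choice t with h | h
    · rw [h]
    · rw [h, Real.sin_neg, neg_div_neg_eq]

lemma sin_div_tendsto : Filter.Tendsto (fun t => Real.sin t / t) (𝓝[≠] (0:ℝ)) (𝓝 1) := by
  have h := hasDerivAt_iff_tendsto_slope.mp (Real.hasDerivAt_sin 0)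
  simp only [Real.cos_zero] at h
  refine h.congr fun t => ?_
  simp [slope_def_field]

lemma cos_slope : Filter.Tendsto (fun t => (Real.cos t - 1) / t) (𝓝[≠] (0:ℝ)) (𝓝 0) := by
  have h := hasDerivAt_iff_tendsto_slope.mp (Real.hasDerivAt_cos 0)
  simp only [Real.sin_zero, neg_zero] at h
  refine h.congr fun t => ?_
  simp [slope_def_field]

lemma sinc_hasDeriv {t : ℝ} (ht : t ≠ 0) :
    HasDerivAt sinc ((t * Real.cos t - Real.sin t) / t ^ 2) t := by
  have hd := (Real.hasDerivAt_sin t).div (hasDerivAt_id t) ht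
  have hev : (fun s => Real.sin s / s) =ᶠ[𝓝 t] sinc := by
    filter_upwards [isOpen_ne.mem_nhds ht] with s hs
    simp [sinc, hs]
  have := hd.congr_of_eventuallyEq hev.symm
  refine this.congr_deriv ?_
  symm
  simp
  ring

lemma sinc_hasDeriv0 : HasDerivAt sinc 0 0 := by
  rw [hasDerivAt_iff_tendsto_slope]
  have L : Filter.Tendsto (fun t => (Real.sin t - t) / t ^ 2) (𝓝[≠] (0:ℝ)) (𝓝 0) := by
    apply HasDerivAt.lhopital_zero_nhdsNE (f' := fun t => Real.cos t - 1) (g' := fun t => 2 * t)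
    · filter_upwards with t
      exact (Real.hasDerivAt_sin t).sub (hasDerivAt_id t)
    · filter_upwards with t
      simpa using hasDerivAt_pow 2 t
    · filter_upwards [self_mem_nhdsWithin] with t ht
      simpa using ht
    · apply tendsto_nhdsWithin_of_tendsto_nhds
      have : Filter.Tendsto (fun t => Real.sin t - t) (𝓝 (0:ℝ)) (𝓝 (Real.sin 0 - 0)) :=
        (Real.continuous_sin.sub continuous_id).tendsto 0
      simpa using this
    · apply tendsto_nhdsWithin_of_tendsto_nhds
      have : Filter.Tendsto (fun t : ℝ => t ^ 2) (𝓝 (0:ℝ)) (𝓝 ((0:ℝ) ^ 2)) :=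
        (continuous_pow 2).tendsto 0
      simpa using this
    · have h2 := cos_slope.div_const 2
      rw [zero_div] at h2
      refine h2.congr fun t => ?_
      rw [div_div, mul_comm]
  refine L.congr' ?_
  filter_upwards [self_mem_nhdsWithin] with t ht
  have ht' : t ≠ 0 := ht
  rw [slope_def_field]
  have h0 : sinc 0 = 1 := by simp [sinc]
  have h1 : sinc t = Real.sin t / t := by simp [sinc, ht']
  rw [h0, h1, sub_zero, show (1:ℝ) = t / t from (div_self ht').symm, div_sub_div_same, div_div, ← sq]

lemma sincD : deriv sinc = fun t => (t * Real.cos t - Real.sin t) / t ^ 2 := by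
  funext t
  rcases eq_or_ne t 0 with rfl | ht
  · simp [sinc_hasDeriv0.deriv]
  · exact (sinc_hasDeriv ht).deriv

lemma sinc_deriv2 : deriv (deriv sinc) 0 = -(1/3) := by
  rw [sincD]
  have hD : HasDerivAt (fun t => (t * Real.cos t - Real.sin t) / t ^ 2) (-(1/3)) 0 := by
    rw [hasDerivAt_iff_tendsto_slope]
    have L : Filter.Tendsto (fun t => (t * Real.cos t - Real.sin t) / t ^ 3) (𝓝[≠] (0:ℝ))
        (𝓝 (-(1/3))) := by
      apply HasDerivAt.lhopital_zero_nhdsNE (f' := fun t => -(t * Real.sin t))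
        (g' := fun t => 3 * t ^ 2)
      · filter_upwards with t
        have := ((hasDerivAt_id t).mul (Real.hasDerivAt_cos t)).sub (Real.hasDerivAt_sin t)
        refine this.congr_deriv ?_
        symm
        simp
      · filter_upwards with t
        simpa using hasDerivAt_pow 3 t
      · filter_upwards [self_mem_nhdsWithin] with t ht
        have ht' : t ≠ 0 := ht
        positivity
      · apply tendsto_nhdsWithin_of_tendsto_nhds
        have : Filter.Tendsto (fun t => t * Real.cos t - Real.sin t) (𝓝 (0:ℝ))
            (𝓝 (0 * Real.cos 0 - Real.sin 0)) :=
          ((continuous_id.mul Real.continuous_cos).sub Real.continuous_sin).tendsto 0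
        simpa using this
      · apply tendsto_nhdsWithin_of_tendsto_nhds
        have : Filter.Tendsto (fun t : ℝ => t ^ 3) (𝓝 (0:ℝ)) (𝓝 ((0:ℝ) ^ 3)) :=
          (continuous_pow 3).tendsto 0
        simpa using this
      · have h2 := sin_div_tendsto.const_mul (-(1/3) : ℝ)
        rw [mul_one] at h2
        refine h2.congr' ?_
        filter_upwards [self_mem_nhdsWithin] with t ht
        have ht' : t ≠ 0 := ht
        field_simp
    refine L.congr' ?_
    filter_upwards [self_mem_nhdsWithin] with t ht
    have ht' : t ≠ 0 := ht
    rw [slope_def_field]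
    show (t * Real.cos t - Real.sin t) / t ^ 3 =
      ((t * Real.cos t - Real.sin t) / t ^ 2 - (0 * Real.cos 0 - Real.sin 0) / (0:ℝ) ^ 2) / (t - 0)
    norm_num
    rw [div_div, ← pow_succ]
  exact hD.deriv

noncomputable def f3 (x y z : ℝ) : ℝ :=
  if Real.sqrt (x ^ 2 + y ^ 2 + z ^ 2) = 0 then 1
  else Real.sin (Real.sqrt (x ^ 2 + y ^ 2 + z ^ 2)) / Real.sqrt (x ^ 2 + y ^ 2 + z ^ 2)

lemma lap3_const_mul (C : ℝ) (f : ℝ → ℝ → ℝ → ℝ) (x y z : ℝ) :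
    lap3 (fun a b c => C * f a b c) x y z = C * lap3 f x y z := by
  have key : ∀ (g : ℝ → ℝ) (w : ℝ), deriv (deriv (fun s => C * g s)) w =
      C * deriv (deriv g) w := by
    intro g w
    have h1 : (deriv fun s => C * g s) = fun s => C * deriv g s :=
      funext fun s => deriv_const_mul_field _
    rw [h1, deriv_const_mul_field]
  simp only [lap3, key]
  ring

lemma lapf (x y z : ℝ) : lap3 f3 x y z = - f3 x y z := by
  have e1 : (fun t => f3 t y z) = sl (y ^ 2 + z ^ 2) := by
    funext t; simp only [f3, sl, add_assoc]
  have e2 : (fun t => f3 x t z) = sl (x ^ 2 + z ^ 2) := by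
    have h : ∀ t : ℝ, x ^ 2 + t ^ 2 + z ^ 2 = t ^ 2 + (x ^ 2 + z ^ 2) := fun t => by ring
    funext t; simp only [f3, sl, h]
  have e3 : (fun t => f3 x y t) = sl (x ^ 2 + y ^ 2) := by
    have h : ∀ t : ℝ, x ^ 2 + y ^ 2 + t ^ 2 = t ^ 2 + (x ^ 2 + y ^ 2) := fun t => by ring
    funext t; simp only [f3, sl, h]
  simp only [lap3, e1, e2, e3]
  rcases eq_or_lt_of_le (by positivity : (0:ℝ) ≤ x ^ 2 + y ^ 2 + z ^ 2) with h0 | hpos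
  · have hx : x = 0 := by nlinarith [sq_nonneg x, sq_nonneg y, sq_nonneg z]
    have hy : y = 0 := by nlinarith [sq_nonneg x, sq_nonneg y, sq_nonneg z]
    have hz : z = 0 := by nlinarith [sq_nonneg x, sq_nonneg y, sq_nonneg z]
    subst hx; subst hy; subst hz
    have hz2 : (0:ℝ) ^ 2 + (0:ℝ) ^ 2 = 0 := by norm_num
    rw [hz2, sl_zero, sinc_deriv2]
    norm_num [sinc]
  · have h1 : 0 < x ^ 2 + (y ^ 2 + z ^ 2) := by linarith
    have h2 : 0 < y ^ 2 + (x ^ 2 + z ^ 2) := by linarith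
    have h3 : 0 < z ^ 2 + (x ^ 2 + y ^ 2) := by linarith
    rw [sl_deriv2 h1, sl_deriv2 h2, sl_deriv2 h3]
    have q1 : x ^ 2 + (y ^ 2 + z ^ 2) = x ^ 2 + y ^ 2 + z ^ 2 := by ring
    have q2 : y ^ 2 + (x ^ 2 + z ^ 2) = x ^ 2 + y ^ 2 + z ^ 2 := by ring
    have q3 : z ^ 2 + (x ^ 2 + y ^ 2) = x ^ 2 + y ^ 2 + z ^ 2 := by ring
    rw [q1, q2, q3]
    set r := Real.sqrt (x ^ 2 + y ^ 2 + z ^ 2) with hr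
    have hrpos : 0 < r := Real.sqrt_pos.mpr hpos
    have hr0 : r ≠ 0 := ne_of_gt hrpos
    have hr2 : r ^ 2 = x ^ 2 + y ^ 2 + z ^ 2 := Real.sq_sqrt hpos.le
    have hf : sl (x ^ 2 + y ^ 2) z = Real.sin r / r := by
      rw [sl, q3, ← hr]
      simp [hr0]
    rw [hf]
    rw [show x ^ 2 = r ^ 2 - y ^ 2 - z ^ 2 by linarith]
    field_simp
    ring

/-- The time-dependent radial Trefftz function `e^{-k(t-τ)} sin(r)/r`
(with value `e^{-k(t-τ)}` at `r = 0`) satisfies the heat equation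
`∂u/∂t - kΔu = 0` on ℝ³ × ℝ. -/
theorem stmt11 (k τ : ℝ) (hk : 0 < k)
    (u : ℝ → ℝ → ℝ → ℝ → ℝ)
    (hu : u = fun x y z t =>
      Real.exp (-k * (t - τ)) *
        (if Real.sqrt (x ^ 2 + y ^ 2 + z ^ 2) = 0 then 1
         else Real.sin (Real.sqrt (x ^ 2 + y ^ 2 + z ^ 2)) / Real.sqrt (x ^ 2 + y ^ 2 + z ^ 2))) :
    ∀ x y z t : ℝ,
      deriv (fun s => u x y z s) t - k * lap3 (fun a b c => u a b c t) x y z = 0 := by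
  subst hu
  intro x y z t
  show deriv (fun s => Real.exp (-k * (s - τ)) * f3 x y z) t -
    k * lap3 (fun a b c => Real.exp (-k * (t - τ)) * f3 a b c) x y z = 0
  have ht : HasDerivAt (fun s => Real.exp (-k * (s - τ)) * f3 x y z)
      (-k * Real.exp (-k * (t - τ)) * f3 x y z) t := by
    have h1 : HasDerivAt (fun s : ℝ => -k * (s - τ)) (-k) t := by
      simpa using ((hasDerivAt_id t).sub_const τ).const_mul (-k)
    have := h1.exp.mul_const (f3 x y z)
    refine this.congr_deriv ?_
    ring
  rw [ht.deriv, lap3_const_mul, lapf]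
  ring
end

section
/- For D > 0, fixed s ∈ ℝ², fixed τ ≥ 0, and 0 < α, let 𝒢(t) = t^α. Then the function G(x,t) = e^{-|x-s|²/(4D(t^α - τ^α))}/(4πD(t^α - τ^α)), defined for t > τ ≥ 0, satisfies the Hausdorff-derivative diffusion equation (1/(α t^{α-1})) ∂G/∂t = D Δ_x G for all x ∈ ℝ² and t > τ. -/
private lemma gauss1 (m c k s : ℝ) (a : ℝ) :
    HasDerivAt (fun a => Real.exp (-((a - s) ^ 2 + m) / c) / k)
      (Real.exp (-((a - s) ^ 2 + m) / c) * (-(2 * (a - s)) / c) / k) a := by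
  have hinner : HasDerivAt (fun a => -((a - s) ^ 2 + m) / c) (-(2 * (a - s)) / c) a := by
    have h : HasDerivAt (fun a => (a - s) ^ 2 + m) (2 * (a - s)) a := by
      simpa using (((hasDerivAt_id a).sub_const s).pow 2).add_const m
    simpa using h.neg.div_const c
  simpa using hinner.exp.div_const k

private lemma gauss2 (m c k s : ℝ) (x : ℝ) :
    deriv (deriv (fun a => Real.exp (-((a - s) ^ 2 + m) / c) / k)) x
      = Real.exp (-((x - s) ^ 2 + m) / c) * ((2 * (x - s)) ^ 2 / c ^ 2 - 2 / c) / k := by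
  have hd : deriv (fun a => Real.exp (-((a - s) ^ 2 + m) / c) / k)
      = fun a => Real.exp (-((a - s) ^ 2 + m) / c) * (-(2 * (a - s)) / c) / k :=
    funext fun a => (gauss1 m c k s a).deriv
  rw [hd]
  have hinner : HasDerivAt (fun a => -((a - s) ^ 2 + m) / c) (-(2 * (x - s)) / c) x := by
    have h : HasDerivAt (fun a => (a - s) ^ 2 + m) (2 * (x - s)) x := by
      simpa using (((hasDerivAt_id x).sub_const s).pow 2).add_const m
    simpa using h.neg.div_const c
  have hlin : HasDerivAt (fun a => -(2 * (a - s)) / c) (-2 / c) x := by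
    have h : HasDerivAt (fun a : ℝ => 2 * (a - s)) 2 x := by
      simpa using ((hasDerivAt_id x).sub_const s).const_mul 2
    simpa using h.neg.div_const c
  have hp : deriv (fun a => Real.exp (-((a - s) ^ 2 + m) / c) * (-(2 * (a - s)) / c) / k) x = _ :=
    ((hinner.exp.mul hlin).div_const k).deriv
  rw [hp]
  ring

/-- Spatial Laplacian of a function of two real variables, via iterated `deriv`. -/
noncomputable def lap2 (u : ℝ → ℝ → ℝ) (x y : ℝ) : ℝ :=
  deriv (deriv (fun t => u t y)) x + deriv (deriv (fun t => u x t)) y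

/-- The fundamental solution of the Hausdorff-derivative diffusion model with
structural function `𝒢(t) = t^α`:
`G = e^{-|x-s|²/(4D(t^α - τ^α))}/(4πD(t^α - τ^α))` satisfies
`(1/(α t^{α-1})) ∂G/∂t = D ΔG` for all `x ∈ ℝ²` and `t > τ ≥ 0`. -/
theorem stmt15 (D α τ s₁ s₂ : ℝ) (hD : 0 < D) (hα : 0 < α) (hτ : 0 ≤ τ)
    (G : ℝ → ℝ → ℝ → ℝ)
    (hG : G = fun x y t =>
      Real.exp (-((x - s₁) ^ 2 + (y - s₂) ^ 2) /
          (4 * D * (t ^ α - τ ^ α))) /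
        (4 * Real.pi * D * (t ^ α - τ ^ α))) :
    ∀ x y t : ℝ, τ < t →
      (1 / (α * t ^ (α - 1))) * deriv (fun r => G x y r) t =
        D * lap2 (fun a b => G a b t) x y := by
  subst hG
  intro x y t htτ
  have ht : 0 < t := lt_of_le_of_lt hτ htτ
  have hu : 0 < t ^ α - τ ^ α := by
    have := Real.rpow_lt_rpow hτ htτ hα
    linarith
  have hu' : t ^ α - τ ^ α ≠ 0 := ne_of_gt hu
  have hπ : Real.pi ≠ 0 := Real.pi_ne_zero
  have hD' : D ≠ 0 := ne_of_gt hD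
  have htp : (0:ℝ) < t ^ (α - 1) := Real.rpow_pos_of_pos ht _
  have htp' : t ^ (α - 1) ≠ 0 := ne_of_gt htp
  -- time derivative
  have hw : HasDerivAt (fun r : ℝ => r ^ α - τ ^ α) (α * t ^ (α - 1)) t := by
    simpa using (Real.hasDerivAt_rpow_const (Or.inl ht.ne')).sub_const (τ ^ α)
  have hden : HasDerivAt (fun r : ℝ => 4 * D * (r ^ α - τ ^ α))
      (4 * D * (α * t ^ (α - 1))) t := hw.const_mul _
  have hden2 : HasDerivAt (fun r : ℝ => 4 * Real.pi * D * (r ^ α - τ ^ α))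
      (4 * Real.pi * D * (α * t ^ (α - 1))) t := hw.const_mul _
  have hden0 : 4 * D * (t ^ α - τ ^ α) ≠ 0 := by positivity
  have hden20 : 4 * Real.pi * D * (t ^ α - τ ^ α) ≠ 0 := by
    have := Real.pi_pos; positivity
  set A := (x - s₁) ^ 2 + (y - s₂) ^ 2 with hA
  have hnum : HasDerivAt (fun r : ℝ => -A / (4 * D * (r ^ α - τ ^ α)))
      ((0 * (4 * D * (t ^ α - τ ^ α)) - -A * (4 * D * (α * t ^ (α - 1)))) /
        (4 * D * (t ^ α - τ ^ α)) ^ 2) t :=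
    (hasDerivAt_const t (-A)).div hden hden0
  have hf : HasDerivAt
      (fun r : ℝ => Real.exp (-A / (4 * D * (r ^ α - τ ^ α))) /
        (4 * Real.pi * D * (r ^ α - τ ^ α)))
      ((Real.exp (-A / (4 * D * (t ^ α - τ ^ α))) *
          ((0 * (4 * D * (t ^ α - τ ^ α)) - -A * (4 * D * (α * t ^ (α - 1)))) /
            (4 * D * (t ^ α - τ ^ α)) ^ 2) * (4 * Real.pi * D * (t ^ α - τ ^ α)) -
        Real.exp (-A / (4 * D * (t ^ α - τ ^ α))) *
          (4 * Real.pi * D * (α * t ^ (α - 1)))) /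
        (4 * Real.pi * D * (t ^ α - τ ^ α)) ^ 2) t :=
    hnum.exp.div hden2 hden20
  rw [hf.deriv]
  -- spatial derivatives
  rw [lap2]
  simp only
  rw [gauss2 ((y - s₂) ^ 2) (4 * D * (t ^ α - τ ^ α)) (4 * Real.pi * D * (t ^ α - τ ^ α)) s₁ x]
  have hcomm : (fun r => Real.exp (-((x - s₁) ^ 2 + (r - s₂) ^ 2) / (4 * D * (t ^ α - τ ^ α))) /
      (4 * Real.pi * D * (t ^ α - τ ^ α)))
      = fun r => Real.exp (-((r - s₂) ^ 2 + (x - s₁) ^ 2) / (4 * D * (t ^ α - τ ^ α))) /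
      (4 * Real.pi * D * (t ^ α - τ ^ α)) := by
    funext r; rw [add_comm ((x - s₁) ^ 2)]
  rw [hcomm,
    gauss2 ((x - s₁) ^ 2) (4 * D * (t ^ α - τ ^ α)) (4 * Real.pi * D * (t ^ α - τ ^ α)) s₂ y]
  have hE1 : -((x - s₁) ^ 2 + (y - s₂) ^ 2) / (4 * D * (t ^ α - τ ^ α))
      = -A / (4 * D * (t ^ α - τ ^ α)) := by rw [hA]
  have hE2 : -((y - s₂) ^ 2 + (x - s₁) ^ 2) / (4 * D * (t ^ α - τ ^ α))
      = -A / (4 * D * (t ^ α - τ ^ α)) := by rw [hA]; ring_nf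
  rw [hE1, hE2]
  set E := Real.exp (-A / (4 * D * (t ^ α - τ ^ α))) with hEdef
  have hαt : α * t ^ (α - 1) ≠ 0 := by positivity
  field_simp
  ring
end

section
/- For D > 0, k ≥ 0, a constant vector v ∈ ℝ³, and x ∈ ℝ³ with r = |x| ≠ 0, let μ ≥ 0 be defined by μ² = |v|²/(4D²) + k²/D. Then the function u(x) = (sinh(μr)/(4πr)) · e^{-(v·x)/(2D)} satisfies the convection–diffusion–reaction equation DΔu + v·∇u - k²u = 0 away from the origin. -/
noncomputable def gfun (μ r : ℝ) : ℝ := Real.sinh (μ*r)/(4*Real.pi*r)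
noncomputable def g1 (μ r : ℝ) : ℝ := (μ * Real.cosh (μ*r) * r - Real.sinh (μ*r))/(4*Real.pi*r^2)
noncomputable def g2 (μ r : ℝ) : ℝ :=
  (μ^2 * Real.sinh (μ*r) * r^2 - 2*μ*Real.cosh (μ*r)*r + 2*Real.sinh (μ*r))/(4*Real.pi*r^3)

lemma hasDerivAt_sinh_mul (μ r : ℝ) :
    HasDerivAt (fun r => Real.sinh (μ*r)) (μ * Real.cosh (μ*r)) r := by
  simpa [mul_comm, Function.comp_def] using (Real.hasDerivAt_sinh (μ*r)).comp r ((hasDerivAt_id r).const_mul μ)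

lemma hasDerivAt_cosh_mul (μ r : ℝ) :
    HasDerivAt (fun r => Real.cosh (μ*r)) (μ * Real.sinh (μ*r)) r := by
  simpa [mul_comm, Function.comp_def] using (Real.hasDerivAt_cosh (μ*r)).comp r ((hasDerivAt_id r).const_mul μ)

lemma hasDerivAt_gfun (μ r : ℝ) (hr : r ≠ 0) :
    HasDerivAt (gfun μ) (g1 μ r) r := by
  have hπ : (Real.pi) ≠ 0 := Real.pi_ne_zero
  have h2 : HasDerivAt (fun r : ℝ => 4*Real.pi*r) (4*Real.pi) r := by
    simpa using (hasDerivAt_id r).const_mul (4*Real.pi)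
  have hne : 4*Real.pi*r ≠ 0 := by
    apply mul_ne_zero (by positivity) hr
  have h := (hasDerivAt_sinh_mul μ r).div h2 hne
  refine h.congr_deriv (Eq.symm ?_)
  unfold g1
  field_simp

lemma hasDerivAt_g1 (μ r : ℝ) (hr : r ≠ 0) :
    HasDerivAt (g1 μ) (g2 μ r) r := by
  have hπ : (Real.pi) ≠ 0 := Real.pi_ne_zero
  have hnum : HasDerivAt (fun r => μ * Real.cosh (μ*r) * r - Real.sinh (μ*r))
      ((μ * (μ * Real.sinh (μ*r))) * r + (μ * Real.cosh (μ*r)) * 1 - μ * Real.cosh (μ*r)) r := by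
    exact (((hasDerivAt_cosh_mul μ r).const_mul μ).mul (hasDerivAt_id r)).sub (hasDerivAt_sinh_mul μ r)
  have hden : HasDerivAt (fun r : ℝ => 4*Real.pi*r^2) (4*Real.pi*(2*r)) r := by
    simpa using ((hasDerivAt_pow 2 r).const_mul (4*Real.pi))
  have hne : 4*Real.pi*r^2 ≠ 0 := by
    apply mul_ne_zero (by positivity) (pow_ne_zero _ hr)
  have h := hnum.div hden hne
  refine h.congr_deriv (Eq.symm ?_)
  unfold g2
  field_simp
  ring

noncomputable def Ffun (μ b c D a : ℝ) : ℝ → ℝ := fun t =>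
  gfun μ (Real.sqrt (t^2+a)) * Real.exp (-(b*t+c)/(2*D))

noncomputable def F1 (μ b c D a : ℝ) : ℝ → ℝ := fun t =>
  Real.exp (-(b*t+c)/(2*D)) *
    (g1 μ (Real.sqrt (t^2+a)) * (t / Real.sqrt (t^2+a))
      - gfun μ (Real.sqrt (t^2+a)) * (b/(2*D)))

noncomputable def F2 (μ b c D a : ℝ) : ℝ → ℝ := fun t =>
  Real.exp (-(b*t+c)/(2*D)) *
    (g2 μ (Real.sqrt (t^2+a)) * t^2/(t^2+a)
      + g1 μ (Real.sqrt (t^2+a)) * a/((t^2+a) * Real.sqrt (t^2+a))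
      - g1 μ (Real.sqrt (t^2+a)) * t * b/(D * Real.sqrt (t^2+a))
      + gfun μ (Real.sqrt (t^2+a)) * b^2/(4*D^2))

lemma hasDerivAt_E (b c D t : ℝ) :
    HasDerivAt (fun t => Real.exp (-(b*t+c)/(2*D)))
      (Real.exp (-(b*t+c)/(2*D)) * (-(b/(2*D)))) t := by
  have hlin : HasDerivAt (fun t : ℝ => -(b*t+c)/(2*D)) (-(b/(2*D))) t := by
    have h0 : HasDerivAt (fun t : ℝ => b*t+c) b t := by
      simpa using ((hasDerivAt_id t).const_mul b).add_const c
    have := h0.neg.div_const (2*D)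
    refine this.congr_deriv (Eq.symm ?_)
    ring
  simpa [Function.comp_def] using (Real.hasDerivAt_exp _).comp t hlin

lemma hasDerivAt_s (a t : ℝ) (h : 0 < t^2+a) :
    HasDerivAt (fun t => Real.sqrt (t^2+a)) (t / Real.sqrt (t^2+a)) t := by
  have h1 : HasDerivAt (fun t : ℝ => t^2+a) (2*t) t := by
    simpa using (hasDerivAt_pow 2 t).add_const a
  have hs0 : Real.sqrt (t^2+a) ≠ 0 := ne_of_gt (Real.sqrt_pos.mpr h)
  have := (Real.hasDerivAt_sqrt (ne_of_gt h)).comp t h1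
  refine this.congr_deriv (Eq.symm ?_)
  field_simp

lemma slice1 (μ b c D a t : ℝ) (h : 0 < t^2+a) :
    HasDerivAt (Ffun μ b c D a) (F1 μ b c D a t) t := by
  have hs0 : Real.sqrt (t^2+a) ≠ 0 := ne_of_gt (Real.sqrt_pos.mpr h)
  have hg : HasDerivAt (fun t => gfun μ (Real.sqrt (t^2+a)))
      (g1 μ (Real.sqrt (t^2+a)) * (t / Real.sqrt (t^2+a))) t := by
    simpa only [Function.comp_def] using (hasDerivAt_gfun μ _ hs0).comp t (hasDerivAt_s a t h)
  have hh := hg.mul (hasDerivAt_E b c D t)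
  unfold Ffun
  refine hh.congr_deriv (Eq.symm ?_)
  simp only [F1]
  ring

lemma slice2 (μ b c D a t : ℝ) (hD : D ≠ 0) (h : 0 < t^2+a) :
    HasDerivAt (F1 μ b c D a) (F2 μ b c D a t) t := by
  have hs0 : Real.sqrt (t^2+a) ≠ 0 := ne_of_gt (Real.sqrt_pos.mpr h)
  have hs2 : (Real.sqrt (t^2+a))^2 = t^2+a := Real.sq_sqrt (le_of_lt h)
  have hA : HasDerivAt (fun t => g1 μ (Real.sqrt (t^2+a)))
      (g2 μ (Real.sqrt (t^2+a)) * (t / Real.sqrt (t^2+a))) t := by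
    simpa only [Function.comp_def] using (hasDerivAt_g1 μ _ hs0).comp t (hasDerivAt_s a t h)
  have hB : HasDerivAt (fun t => gfun μ (Real.sqrt (t^2+a)))
      (g1 μ (Real.sqrt (t^2+a)) * (t / Real.sqrt (t^2+a))) t := by
    simpa only [Function.comp_def] using (hasDerivAt_gfun μ _ hs0).comp t (hasDerivAt_s a t h)
  have hQ : HasDerivAt (fun t => t / Real.sqrt (t^2+a))
      ((1 * Real.sqrt (t^2+a) - t * (t / Real.sqrt (t^2+a))) / (Real.sqrt (t^2+a))^2) t :=
    (hasDerivAt_id t).div (hasDerivAt_s a t h) hs0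
  have hinner : HasDerivAt (fun t => g1 μ (Real.sqrt (t^2+a)) * (t / Real.sqrt (t^2+a))
      - gfun μ (Real.sqrt (t^2+a)) * (b/(2*D)))
      ((g2 μ (Real.sqrt (t^2+a)) * (t / Real.sqrt (t^2+a))) * (t / Real.sqrt (t^2+a))
        + g1 μ (Real.sqrt (t^2+a)) *
          ((1 * Real.sqrt (t^2+a) - t * (t / Real.sqrt (t^2+a))) / (Real.sqrt (t^2+a))^2)
        - (g1 μ (Real.sqrt (t^2+a)) * (t / Real.sqrt (t^2+a))) * (b/(2*D))) t := by
    have h1 : HasDerivAt (fun t => g1 μ (Real.sqrt (t^2+a)) * (t / Real.sqrt (t^2+a)))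
        ((g2 μ (Real.sqrt (t^2+a)) * (t / Real.sqrt (t^2+a))) * (t / Real.sqrt (t^2+a))
          + g1 μ (Real.sqrt (t^2+a)) *
            ((1 * Real.sqrt (t^2+a) - t * (t / Real.sqrt (t^2+a))) / (Real.sqrt (t^2+a))^2)) t := by
      exact hA.mul hQ
    have h2 : HasDerivAt (fun t => gfun μ (Real.sqrt (t^2+a)) * (b/(2*D)))
        ((g1 μ (Real.sqrt (t^2+a)) * (t / Real.sqrt (t^2+a))) * (b/(2*D))) t := by
      exact hB.mul_const (b/(2*D))
    exact h1.sub h2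
  have hh := (hasDerivAt_E b c D t).mul hinner
  unfold F1
  refine hh.congr_deriv (Eq.symm ?_)
  simp only [F2]
  set s := Real.sqrt (t^2+a) with hsdef
  have hsne : s ≠ 0 := hs0
  have ha : a = s^2 - t^2 := by rw [hs2]; ring
  rw [ha]
  field_simp [hsne, hD]
  ring

lemma deriv_Ffun (μ b c D a x : ℝ) (h : 0 < x^2+a) :
    deriv (Ffun μ b c D a) x = F1 μ b c D a x := (slice1 μ b c D a x h).deriv

lemma deriv2_Ffun (μ b c D a x : ℝ) (hD : D ≠ 0) (h : 0 < x^2+a) :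
    deriv (deriv (Ffun μ b c D a)) x = F2 μ b c D a x := by
  have hU : IsOpen {t : ℝ | 0 < t^2+a} :=
    isOpen_lt continuous_const (by continuity)
  have hev : deriv (Ffun μ b c D a) =ᶠ[nhds x] F1 μ b c D a := by
    filter_upwards [hU.mem_nhds h] with t ht using (slice1 μ b c D a t ht).deriv
  rw [hev.deriv_eq]
  exact (slice2 μ b c D a x hD h).deriv

set_option maxHeartbeats 2000000 in
/-- The 3D radial Trefftz kernel
`u = (sinh(μr)/(4πr)) e^{-(v·x)/(2D)}` with `μ = √(|v|²/(4D²) + k²/D)`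
satisfies the convection–diffusion–reaction equation
`DΔu + v·∇u - k²u = 0` away from the origin. -/
theorem stmt19 (D k v₁ v₂ v₃ : ℝ) (hD : 0 < D) (hk : 0 ≤ k)
    (μ : ℝ) (hμ : μ = Real.sqrt ((v₁ ^ 2 + v₂ ^ 2 + v₃ ^ 2) / (4 * D ^ 2) + k ^ 2 / D))
    (u : ℝ → ℝ → ℝ → ℝ)
    (hu : u = fun x y z =>
      Real.sinh (μ * Real.sqrt (x ^ 2 + y ^ 2 + z ^ 2)) /
        (4 * Real.pi * Real.sqrt (x ^ 2 + y ^ 2 + z ^ 2)) *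
        Real.exp (-(v₁ * x + v₂ * y + v₃ * z) / (2 * D)))
    (x y z : ℝ) (h : (x, y, z) ≠ (0, 0, 0)) :
    D * lap3 u x y z +
      (v₁ * deriv (fun t => u t y z) x + v₂ * deriv (fun t => u x t z) y +
        v₃ * deriv (fun t => u x y t) z) - k ^ 2 * u x y z = 0 := by
  have hD0 : D ≠ 0 := ne_of_gt hD
  have hq : 0 < x^2 + y^2 + z^2 := by
    by_contra hc
    push_neg at hc
    have hx : x = 0 := by nlinarith [sq_nonneg x, sq_nonneg y, sq_nonneg z]
    have hy : y = 0 := by nlinarith [sq_nonneg x, sq_nonneg y, sq_nonneg z]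
    have hz : z = 0 := by nlinarith [sq_nonneg x, sq_nonneg y, sq_nonneg z]
    exact h (by simp [hx, hy, hz])
  have ex : (fun t => u t y z) = Ffun μ v₁ (v₂*y+v₃*z) D (y^2+z^2) := by
    funext t
    rw [hu]
    simp only [Ffun, gfun]
    rw [show t^2+(y^2+z^2) = t^2+y^2+z^2 by ring,
        show -(v₁*t+(v₂*y+v₃*z)) = -(v₁*t+v₂*y+v₃*z) by ring]
  have ey : (fun t => u x t z) = Ffun μ v₂ (v₁*x+v₃*z) D (x^2+z^2) := by
    funext t
    rw [hu]
    simp only [Ffun, gfun]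
    rw [show t^2+(x^2+z^2) = x^2+t^2+z^2 by ring,
        show -(v₂*t+(v₁*x+v₃*z)) = -(v₁*x+v₂*t+v₃*z) by ring]
  have ez : (fun t => u x y t) = Ffun μ v₃ (v₁*x+v₂*y) D (x^2+y^2) := by
    funext t
    rw [hu]
    simp only [Ffun, gfun]
    rw [show t^2+(x^2+y^2) = x^2+y^2+t^2 by ring,
        show -(v₃*t+(v₁*x+v₂*y)) = -(v₁*x+v₂*y+v₃*t) by ring]
  have hqx : 0 < x^2+(y^2+z^2) := by nlinarith
  have hqy : 0 < y^2+(x^2+z^2) := by nlinarith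
  have hqz : 0 < z^2+(x^2+y^2) := by nlinarith
  unfold lap3
  rw [ex, ey, ez,
    deriv2_Ffun μ v₁ (v₂*y+v₃*z) D (y^2+z^2) x hD0 hqx,
    deriv2_Ffun μ v₂ (v₁*x+v₃*z) D (x^2+z^2) y hD0 hqy,
    deriv2_Ffun μ v₃ (v₁*x+v₂*y) D (x^2+y^2) z hD0 hqz,
    deriv_Ffun μ v₁ (v₂*y+v₃*z) D (y^2+z^2) x hqx,
    deriv_Ffun μ v₂ (v₁*x+v₃*z) D (x^2+z^2) y hqy,
    deriv_Ffun μ v₃ (v₁*x+v₂*y) D (x^2+y^2) z hqz, hu]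
  simp only [F1, F2, gfun, g1, g2]
  rw [show x^2+(y^2+z^2) = x^2+y^2+z^2 by ring,
      show y^2+(x^2+z^2) = x^2+y^2+z^2 by ring,
      show z^2+(x^2+y^2) = x^2+y^2+z^2 by ring,
      show -(v₁*x+(v₂*y+v₃*z)) = -(v₁*x+v₂*y+v₃*z) by ring,
      show -(v₂*y+(v₁*x+v₃*z)) = -(v₁*x+v₂*y+v₃*z) by ring,
      show -(v₃*z+(v₁*x+v₂*y)) = -(v₁*x+v₂*y+v₃*z) by ring]
  set r := Real.sqrt (x^2+y^2+z^2) with hrdef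
  have hr : 0 < r := Real.sqrt_pos.mpr hq
  have hrne : r ≠ 0 := ne_of_gt hr
  have hr2 : r^2 = x^2+y^2+z^2 := Real.sq_sqrt (le_of_lt hq)
  have hμ2 : μ^2 = (v₁^2+v₂^2+v₃^2)/(4*D^2) + k^2/D := by
    rw [hμ]
    exact Real.sq_sqrt (by positivity)
  have hk2 : k^2 = μ^2*D - (v₁^2+v₂^2+v₃^2)/(4*D) := by
    rw [hμ2]
    field_simp
    ring
  rw [← hr2, hk2, show z^2 = r^2 - x^2 - y^2 by nlinarith [hr2]]
  have hπ : Real.pi ≠ 0 := Real.pi_ne_zero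
  field_simp [hrne, hD0, hπ]
  ring
end
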